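/- Promotion strictly increases the learner's norm: moving an isolated frontier state r (apart from every basis state) into the basis increases N_e by at least 1. Specifically, if B' = B ∪ {r}, then the quadratic term increases by |B| + 1, while the apartness term decreases by at most |B|, so N_e(T') ≥ N_e(T) + 1. -/

import Mathlib

/-! The quadratic term of the norm grows by `|B| + 1` when the basis grows by one state, while
the only apartness pairs that disappear are those in `B × {r}`, at most `|B|` of them; the
transition term can only grow. -/

structure PMealy (I O : Type) where
  Q : Type
  q0 : Q
  trans : Q → I → Option Q
  out1 : Q → I → Option O

namespace PMealy

variable {I O : Type}

def pout (M : PMealy I O) : M.Q → List I → Option (List O)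
  | _, [] => some []
  | q, i :: σ =>
    match M.out1 q i, M.trans q i with
    | some o, some q' => (M.pout q' σ).map (o :: ·)
    | _, _ => none

def prun (M : PMealy I O) : M.Q → List I → Option M.Q
  | q, [] => some q
  | q, i :: σ =>
    match M.trans q i with
    | some q' => M.prun q' σ
    | none => none

/-- States `p` and `q` are apart: some input word on which both outputs are
defined produces different output words. -/
def Apart (M : PMealy I O) (p q : M.Q) : Prop :=
  ∃ (σ : List I) (a b : List O),
    M.pout p σ = some a ∧ M.pout q σ = some b ∧ a ≠ b

end PMealy

attribute [local instance] Classical.propDecidable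

/-- The norm used by the `L#_e` learner on an observation tree with basis `B`
and frontier `F`. -/
noncomputable def normE {I O : Type} [Fintype I] (T : PMealy I O)
    (B F : Finset T.Q) : ℕ :=
  B.card * (B.card + 1) / 2
    + ((B ×ˢ (Finset.univ : Finset I)).filter
        (fun p => (T.trans p.1 p.2).isSome = true)).card
    + ((B ×ˢ F).filter (fun p => T.Apart p.1 p.2)).card

open Finset

theorem Nat.add_one_mul_add_two_div_two (n : ℕ) :
    (n + 1) * (n + 1 + 1) / 2 = n * (n + 1) / 2 + (n + 1) := by
  simpa [Nat.mul_comm] using Nat.triangle_succ (n + 1)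

namespace Finset

variable {α β : Type*} (p : α × β → Prop) [DecidablePred p]

theorem card_filter_product_le_of_subset_left {s s' : Finset α} (h : s ⊆ s') (t : Finset β) :
    #((s ×ˢ t).filter p) ≤ #((s' ×ˢ t).filter p) :=
  card_le_card (filter_subset_filter p (product_subset_product_left h))

theorem card_filter_product_le_card_filter_product_erase_add [DecidableEq β]
    (s : Finset α) (t : Finset β) (r : β) :
    #((s ×ˢ t).filter p) ≤ #((s ×ˢ t.erase r).filter p) + #s :=
  calc #((s ×ˢ t).filter p)
      ≤ #((s ×ˢ t.erase r).filter p ∪ s ×ˢ {r}) := card_le_card fun x hx => by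
        simp only [mem_filter, mem_product, mem_erase, mem_union, mem_singleton] at hx ⊢
        tauto
    _ ≤ #((s ×ˢ t.erase r).filter p) + #(s ×ˢ {r}) := card_union_le _ _
    _ = #((s ×ˢ t.erase r).filter p) + #s := by rw [card_product, card_singleton, mul_one]

end Finset

theorem stmt17_general {I O : Type} [Fintype I] (T : PMealy I O) [DecidableEq T.Q]
    (B F : Finset T.Q) (r : T.Q)
    (hrB : r ∉ B) :
    normE T B F + 1 ≤ normE T (insert r B) (F.erase r) := by
  have hquad : #(insert r B) * (#(insert r B) + 1) / 2 = #B * (#B + 1) / 2 + (#B + 1) := by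
    rw [card_insert_of_notMem hrB, Nat.add_one_mul_add_two_div_two]
  have htrans := card_filter_product_le_of_subset_left (fun p : T.Q × I => (T.trans p.1 p.2).isSome)
    (subset_insert r B) univ
  have hapart := (card_filter_product_le_card_filter_product_erase_add
    (fun p : T.Q × T.Q => T.Apart p.1 p.2) B F r).trans <| Nat.add_le_add_right
    (card_filter_product_le_of_subset_left _ (subset_insert r B) (F.erase r)) #B
  unfold normE
  omega

/-- Promotion strictly increases the learner's norm: moving an isolated
frontier state `r` (apart from every basis state) into the basis increases
`N_e` by at least `1`. -/
theorem stmt17 {I O : Type} [Fintype I] (T : PMealy I O) [DecidableEq T.Q]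
    (B F : Finset T.Q) (r : T.Q)
    (hrF : r ∈ F) (hrB : r ∉ B)
    (hiso : ∀ q ∈ B, T.Apart q r) :
    normE T B F + 1 ≤ normE T (insert r B) (F.erase r) :=
  stmt17_general T B F r hrB
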